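/- Let Q be a nonempty string, r a nonnegative integer, and P and T strings with |P| ≤ |T|. Set P̄ := Q^∞[r..r+|P|) and T̄ := Q^∞[0..|T|), and define E := {τ − π : π ∈ Mis(P,P̄), τ ∈ Mis(T,T̄)}. Then for every integer x with 0 ≤ x ≤ |T|−|P|, x ≡ r (mod |Q|), and x ∉ E, it holds that δ_H(P, T[x..x+|P|)) = δ_H(P, P̄) + δ_H(T̄[x..x+|P|), T[x..x+|P|)). -/

import Mathlib

/-!
Since `x ≡ r (mod |Q|)`, the fragment `T̄[x..x+|P|)` is exactly `P̄`, so the claim is equality in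
the triangle inequality `δ_H(P, T') ≤ δ_H(P, P̄) + δ_H(P̄, T')` for `T' = T[x..x+|P|)`. Equality
holds as soon as no position is a mismatch of both pairs, and a common mismatch `i` would give
`π = i ∈ Mis(P, P̄)` and `τ = x + i ∈ Mis(T, T̄)` with `τ - π = x ∈ E`.
-/

/-- Mismatch positions of two (equal-length) strings:
`Mis(X,Y) = {i : X[i] ≠ Y[i]}`. -/
def mis {α : Type*} [DecidableEq α] [Inhabited α] (X Y : List α) : Finset ℕ :=
  (Finset.range (min X.length Y.length)).filter (fun i => X.getD i default ≠ Y.getD i default)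

/-- Hamming distance of two (equal-length) strings: the number of mismatch positions. -/
def hdist {α : Type*} [DecidableEq α] [Inhabited α] (X Y : List α) : ℕ := (mis X Y).card

/-- The fragment `S[x..x+L)`. -/
def frag {α : Type*} (S : List α) (x L : ℕ) : List α := (S.drop x).take L

/-- `Q^∞[a..a+L)`: the string of length `L` whose `i`-th character is `Q[(a+i) mod |Q|]`. -/
def qinf {α : Type*} [Inhabited α] (Q : List α) (a L : ℕ) : List α :=
  (List.range L).map (fun i => Q.getD ((a + i) % Q.length) default)

/-- A nonempty string is primitive if it is not of the form `Y^h` with `h ≥ 2`. -/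
def Primitive {α : Type*} (Q : List α) : Prop :=
  Q ≠ [] ∧ ∀ (Y : List α) (h : ℕ), 2 ≤ h → Q ≠ (List.replicate h Y).flatten

section Strings

variable {α : Type*}

@[simp]
lemma length_frag (S : List α) (x L : ℕ) : (frag S x L).length = min L (S.length - x) := by
  simp [frag]

variable [Inhabited α]

@[simp]
lemma length_qinf (Q : List α) (a L : ℕ) : (qinf Q a L).length = L := by
  simp [qinf]

lemma getD_frag (S : List α) (x L : ℕ) {i : ℕ} (hi : i < L) :
    (frag S x L).getD i default = S.getD (x + i) default := by
  simp [frag, List.getD_eq_getElem?_getD, hi, List.getElem?_drop]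

lemma qinf_congr_mod (Q : List α) {a b : ℕ} (h : a % Q.length = b % Q.length) (L : ℕ) :
    qinf Q a L = qinf Q b L := by
  refine List.map_congr_left fun i _ => ?_
  rw [Nat.add_mod, h, ← Nat.add_mod]

lemma frag_qinf (Q : List α) (a : ℕ) {x L n : ℕ} (h : x + L ≤ n) :
    frag (qinf Q a n) x L = qinf Q (a + x) L := by
  refine List.ext_getElem (by simp; omega) fun i hi _ => ?_
  simp only [length_frag, length_qinf] at hi
  simp [frag, qinf, add_assoc]

end Strings

section Hamming

variable {α : Type*} [DecidableEq α] [Inhabited α]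

lemma mem_mis {X Y : List α} {i : ℕ} :
    i ∈ mis X Y ↔ i < min X.length Y.length ∧ X.getD i default ≠ Y.getD i default := by
  rw [mis, Finset.mem_filter, Finset.mem_range]

lemma mis_comm (X Y : List α) : mis X Y = mis Y X := by
  simp only [mis, min_comm X.length, ne_comm]

lemma mem_mis_frag (X Y : List α) (x L i : ℕ) :
    i ∈ mis (frag X x L) (frag Y x L) ↔ i < L ∧ x + i ∈ mis X Y := by
  simp only [mem_mis, length_frag]
  constructor
  · rintro ⟨hi, hne⟩
    have hiL : i < L := by omega
    rw [getD_frag _ _ _ hiL, getD_frag _ _ _ hiL] at hne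
    exact ⟨hiL, by omega, hne⟩
  · rintro ⟨hiL, hi, hne⟩
    rw [getD_frag _ _ _ hiL, getD_frag _ _ _ hiL]
    exact ⟨by omega, hne⟩

lemma mis_eq_union_of_disjoint {X Y Z : List α} (hXY : X.length = Y.length)
    (hYZ : Y.length = Z.length) (h : Disjoint (mis X Y) (mis Y Z)) :
    mis X Z = mis X Y ∪ mis Y Z := by
  have hYZ_of_XY : ∀ i < X.length, X.getD i default ≠ Y.getD i default →
      Y.getD i default = Z.getD i default := fun i hi hXYi => by
    by_contra hYZi
    exact Finset.disjoint_left.mp h (mem_mis.mpr ⟨by omega, hXYi⟩)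
      (mem_mis.mpr ⟨by omega, hYZi⟩)
  ext i
  simp only [Finset.mem_union, mem_mis, ← hXY, ← hYZ, min_self]
  grind

lemma hdist_eq_add_of_disjoint {X Y Z : List α} (hXY : X.length = Y.length)
    (hYZ : Y.length = Z.length) (h : Disjoint (mis X Y) (mis Y Z)) :
    hdist X Z = hdist X Y + hdist Y Z := by
  rw [hdist, mis_eq_union_of_disjoint hXY hYZ h, Finset.card_union_of_disjoint h, hdist, hdist]

end Hamming

theorem stmt5_general {α : Type*} [DecidableEq α] [Inhabited α]
    (Q P T : List α) (r : ℕ) :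
    ∀ x : ℕ, x + P.length ≤ T.length → x % Q.length = r % Q.length →
      (¬ ∃ π ∈ mis P (qinf Q r P.length), ∃ τ ∈ mis T (qinf Q 0 T.length),
        (x : ℤ) = (τ : ℤ) - (π : ℤ)) →
      hdist P (frag T x P.length) =
        hdist P (qinf Q r P.length) +
          hdist (frag (qinf Q 0 T.length) x P.length) (frag T x P.length) := by
  intro x hx hmod hE
  have hperiodic : frag (qinf Q 0 T.length) x P.length = qinf Q r P.length := by
    rw [frag_qinf Q 0 hx, zero_add, qinf_congr_mod Q hmod]
  have hdisj : Disjoint (mis P (qinf Q r P.length))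
      (mis (qinf Q r P.length) (frag T x P.length)) := by
    refine Finset.disjoint_left.mpr fun i hiP hiT => hE ⟨i, hiP, x + i, ?_, by push_cast; ring⟩
    rw [← hperiodic, mem_mis_frag, mis_comm] at hiT
    exact hiT.2
  rw [hperiodic]
  exact hdist_eq_add_of_disjoint (by simp) (by simp; omega) hdisj

/-- With `P̄ = Q^∞[r..r+|P|)`, `T̄ = Q^∞[0..|T|)` and
`E = {τ - π : π ∈ Mis(P,P̄), τ ∈ Mis(T,T̄)}`, for every position `x ≡ r (mod |Q|)` with
`x ∉ E` the triangle inequality holds with equality: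
`δ_H(P, T[x..x+|P|)) = δ_H(P,P̄) + δ_H(T̄[x..x+|P|), T[x..x+|P|))`. -/
theorem stmt5 {α : Type*} [DecidableEq α] [Inhabited α]
    (Q P T : List α) (hQ : Q ≠ []) (r : ℕ) (hPT : P.length ≤ T.length) :
    ∀ x : ℕ, x + P.length ≤ T.length → x % Q.length = r % Q.length →
      (¬ ∃ π ∈ mis P (qinf Q r P.length), ∃ τ ∈ mis T (qinf Q 0 T.length),
        (x : ℤ) = (τ : ℤ) - (π : ℤ)) →
      hdist P (frag T x P.length) =
        hdist P (qinf Q r P.length) +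
          hdist (frag (qinf Q 0 T.length) x P.length) (frag T x P.length) :=
  stmt5_general Q P T r
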